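/- arXiv:0803.2622 — 5 statements merged into one kernel-verified Lean document; each statement's English description precedes it below -/
import Mathlib

section
/- Let H : ℝ^L → ℝⁿ be linear, z ∈ ℝⁿ with z_i > 0 for all i, λ > 0, ψ : ℝ → ℝ strictly convex, and C′ = {α ∈ ℝ^L : (Hα)_i ≥ 0 for all i}. Then the functional J(α) = Σ_{i=1}^n (1/2)(z_i − 2√((Hα)_i + 3/8))² + λ·Σ_{j=1}^L ψ(α_j) has at most one minimizer on C′. -/
/-! The Anscombe fidelity `η ↦ (1/2)(z - 2√(η + 3/8))²` is convex for `z ≥ 0`: expanding the square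
leaves an affine function minus `z` times the concave map `η ↦ 2√(η + 3/8)`. Composed with the linear
map `H` and summed it stays convex on `C′`, and adding `λ Σⱼ ψ(αⱼ)`, strictly convex as soon as `ψ`
is, gives a strictly convex functional, which has at most one minimiser on a convex set. -/

open Set

noncomputable def anscombe (η : ℝ) : ℝ := 2 * √(η + 3 / 8)

lemma concaveOn_anscombe : ConcaveOn ℝ (Ici (-(3 / 8))) anscombe := by
  have hdom : (fun η : ℝ => 3 / 8 + η) ⁻¹' Ici 0 = Ici (-(3 / 8)) := by
    ext η; simp only [mem_preimage, mem_Ici]; constructor <;> intro h <;> linarith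
  have h := (Real.strictConcaveOn_sqrt.concaveOn.translate_left (3 / 8 : ℝ)).smul zero_le_two
  rwa [hdom] at h

lemma convexOn_half_sq_sub_anscombe {z : ℝ} (hz : 0 ≤ z) :
    ConvexOn ℝ (Ici (-(3 / 8))) fun η => (1 / 2) * (z - anscombe η) ^ 2 := by
  have haffine : ConvexOn ℝ (Ici (-(3 / 8))) fun η : ℝ => 2 * η + (z ^ 2 / 2 + 3 / 4) :=
    ((convexOn_id (convex_Ici _)).smul zero_le_two).add_const _
  refine (haffine.sub (concaveOn_anscombe.smul hz)).congr fun η hη => ?_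
  have hsq : √(η + 3 / 8) ^ 2 = η + 3 / 8 := Real.sq_sqrt (by rw [mem_Ici] at hη; linarith)
  simp only [anscombe, Pi.sub_apply, smul_eq_mul]
  nlinarith [hsq]

section Sums

variable {𝕜 E β ι : Type*} [Semiring 𝕜] [PartialOrder 𝕜] [AddCommMonoid E] [SMul 𝕜 E]
  [AddCommMonoid β] [PartialOrder β] [IsOrderedAddMonoid β] [Module 𝕜 β] {s : Set E}

lemma ConvexOn.finset_sum (hs : Convex 𝕜 s) {t : Finset ι} {f : ι → E → β}
    (hf : ∀ i ∈ t, ConvexOn 𝕜 s (f i)) : ConvexOn 𝕜 s fun x => ∑ i ∈ t, f i x := by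
  classical
  induction t using Finset.induction_on with
  | empty => simpa using convexOn_const 0 hs
  | insert i t hi ih =>
    simp only [Finset.sum_insert hi]
    exact (hf i (t.mem_insert_self i)).add (ih fun j hj => hf j (Finset.mem_insert_of_mem hj))

end Sums

lemma ConvexOn.sum_comp_linearMap_apply {ι E : Type*} [Fintype ι] [AddCommGroup E] [Module ℝ E]
    {s : Set ℝ} {f : ι → ℝ → ℝ} (hf : ∀ i, ConvexOn ℝ s (f i)) (H : E →ₗ[ℝ] ι → ℝ) :
    ConvexOn ℝ (H ⁻¹' univ.pi fun _ => s) fun x => ∑ i, f i (H x i) := by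
  have hC : Convex ℝ (H ⁻¹' univ.pi fun _ => s) :=
    (convex_pi fun i _ => (hf i).1).linear_preimage H
  refine ConvexOn.finset_sum hC fun i _ => ?_
  refine ((hf i).comp_linearMap (LinearMap.proj i ∘ₗ H)).subset (fun x hx => ?_) hC
  exact hx i (mem_univ i)

lemma StrictConvexOn.sum_comp_eval {ι : Type*} [Fintype ι] {s : Set ℝ} {ψ : ℝ → ℝ}
    (hψ : StrictConvexOn ℝ s ψ) :
    StrictConvexOn ℝ (univ.pi fun _ : ι => s) fun x => ∑ j, ψ (x j) := by
  refine ⟨convex_pi fun _ _ => hψ.1, fun x hx y hy hxy a b ha hb hab => ?_⟩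
  obtain ⟨j, hj⟩ := Function.ne_iff.mp hxy
  calc ∑ i, ψ ((a • x + b • y) i)
      < ∑ i, (a * ψ (x i) + b * ψ (y i)) := by
        refine Finset.sum_lt_sum (fun i _ => ?_) ⟨j, Finset.mem_univ j, ?_⟩
        · exact hψ.convexOn.2 (hx i (mem_univ i)) (hy i (mem_univ i)) ha.le hb.le hab
        · exact hψ.2 (hx j (mem_univ j)) (hy j (mem_univ j)) hj ha hb hab
    _ = a • ∑ i, ψ (x i) + b • ∑ i, ψ (y i) := by
        simp only [smul_eq_mul, Finset.sum_add_distrib, Finset.mul_sum]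

lemma StrictConvexOn.const_mul {E : Type*} [AddCommMonoid E] [SMul ℝ E] {s : Set E} {f : E → ℝ}
    {c : ℝ} (hc : 0 < c) (hf : StrictConvexOn ℝ s f) : StrictConvexOn ℝ s fun x => c * f x := by
  refine ⟨hf.1, fun x hx y hy hxy a b ha hb hab => ?_⟩
  calc c * f (a • x + b • y) < c * (a • f x + b • f y) :=
        mul_lt_mul_of_pos_left (hf.2 hx hy hxy ha hb hab) hc
    _ = a • (c * f x) + b • (c * f y) := by simp only [smul_eq_mul]; ring

/-- Uniqueness of the minimizer (Theorem 1 of the paper, strictly convex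
penalty): if `ψ` is strictly convex, the functional
`J(α) = Σᵢ (1/2)(zᵢ − 2√((Hα)ᵢ + 3/8))² + λ Σⱼ ψ(αⱼ)` has at most one
minimizer on `C′ = {α : (Hα)ᵢ ≥ 0 ∀ i}`. -/
theorem deconvolution_functional_unique_minimizer_strictConvex (n L : ℕ)
    (H : (Fin L → ℝ) →ₗ[ℝ] (Fin n → ℝ)) (z : Fin n → ℝ) (hz : ∀ i, 0 < z i)
    (lam : ℝ) (hlam : 0 < lam) (ψ : ℝ → ℝ) (hψ : StrictConvexOn ℝ Set.univ ψ)
    (J : (Fin L → ℝ) → ℝ)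
    (hJ : ∀ α, J α = ∑ i, (1 / 2) * (z i - 2 * Real.sqrt (H α i + 3 / 8)) ^ 2
            + lam * ∑ j, ψ (α j))
    (a b : Fin L → ℝ)
    (ha : ∀ i, 0 ≤ H a i) (hb : ∀ i, 0 ≤ H b i)
    (hmina : ∀ α : Fin L → ℝ, (∀ i, 0 ≤ H α i) → J a ≤ J α)
    (hminb : ∀ α : Fin L → ℝ, (∀ i, 0 ≤ H α i) → J b ≤ J α) :
    a = b := by
  set C : Set (Fin L → ℝ) := H ⁻¹' univ.pi fun _ => Ici 0
  have hmem : ∀ α, α ∈ C ↔ ∀ i, 0 ≤ H α i := fun α => by simp [C, Pi.le_def]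
  have hdata : ConvexOn ℝ C fun α => ∑ i, (1 / 2) * (z i - anscombe (H α i)) ^ 2 :=
    ConvexOn.sum_comp_linearMap_apply (fun i => (convexOn_half_sq_sub_anscombe (hz i).le).subset
      (Ici_subset_Ici.2 (by norm_num)) (convex_Ici 0)) H
  have hpenalty : StrictConvexOn ℝ C fun α => lam * ∑ j, ψ (α j) := by
    refine (StrictConvexOn.const_mul hlam ?_).subset (subset_univ C) hdata.1
    simpa only [pi_univ] using hψ.sum_comp_eval (ι := Fin L)
  obtain rfl : J = _ := funext hJ
  exact (hdata.add_strictConvexOn hpenalty).eq_of_isMinOn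
    (isMinOn_iff.2 fun α hα => hmina α ((hmem α).1 hα))
    (isMinOn_iff.2 fun α hα => hminb α ((hmem α).1 hα)) ((hmem a).2 ha) ((hmem b).2 hb)
end

section
/- Let ψ : ℝ → ℝ be convex, even, nonnegative, nondecreasing on [0, ∞), continuous, with ψ(0) = 0, and suppose ψ has right derivative d = ψ′₊(0) > 0 at 0. Let δ > 0, β ∈ ℝ, and let α̂ be the unique minimizer of α ↦ δψ(α) + (1/2)(α − β)². Then α̂ = 0 if and only if |β| ≤ δ·d. -/
/-!
Let `F(α) = δψ(α) + (α − β)²/2`. If `α̂ = 0`, then `0` minimizes `F` on `[0, ∞)`, so the right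
derivative `δd − β` of `F` at `0` is nonnegative; since `ψ` is even, `α ↦ F(−α)` is the
objective for `−β`, which gives `−β ≤ δd` in the same way. Conversely, convexity puts `ψ` above its
tangent cone at `0`, `ψ(α) ≥ ψ(0) + d|α|`, so if `|β| ≤ δd` then
`F(α) − F(0) ≥ δd|α| − βα + α²/2 ≥ 0`: `0` is a minimizer, hence it is `α̂` by uniqueness.
-/

open Set

lemma IsMinOn.nonneg_of_hasDerivWithinAt_Ici {f : ℝ → ℝ} {f' a : ℝ} (hmin : IsMinOn f (Ici a) a)
    (hf : HasDerivWithinAt f f' (Ici a) a) : 0 ≤ f' := by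
  have hone : (1 : ℝ) ∈ posTangentConeAt (Ici a) a :=
    mem_posTangentConeAt_of_segment_subset <|
      (convex_Ici a).segment_subset self_mem_Ici (by simp)
  simpa using hmin.localize.hasFDerivWithinAt_nonneg hf.hasFDerivWithinAt hone

lemma ConvexOn.add_mul_sub_le_of_hasDerivWithinAt_Ioi {S : Set ℝ} {f : ℝ → ℝ} {f' x y : ℝ}
    (hf : ConvexOn ℝ S f) (hx : x ∈ S) (hy : y ∈ S) (hxy : x ≤ y)
    (hf' : HasDerivWithinAt f f' (Ioi x) x) : f x + f' * (y - x) ≤ f y := by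
  rcases hxy.eq_or_lt with rfl | hlt
  · simp
  have hslope := hf.le_slope_of_hasDerivWithinAt_Ioi hx hy hlt hf'
  rw [slope_def_field, le_div_iff₀ (sub_pos.2 hlt)] at hslope
  linarith

lemma ConvexOn.add_mul_abs_le_of_even {ψ : ℝ → ℝ} {d : ℝ} (hconv : ConvexOn ℝ univ ψ)
    (heven : ∀ t, ψ (-t) = ψ t) (hderiv : HasDerivWithinAt ψ d (Ici 0) 0) (t : ℝ) :
    ψ 0 + d * |t| ≤ ψ t := by
  have tangent : ∀ s, 0 ≤ s → ψ 0 + d * s ≤ ψ s := fun s hs => by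
    simpa using hconv.add_mul_sub_le_of_hasDerivWithinAt_Ioi (mem_univ 0) (mem_univ s) hs
      (hderiv.mono Ioi_subset_Ici_self)
  rcases le_total 0 t with ht | ht
  · simpa [abs_of_nonneg ht] using tangent t ht
  · simpa [abs_of_nonpos ht, heven] using tangent (-t) (neg_nonneg.2 ht)

section ProxObjective

variable {ψ : ℝ → ℝ} {d δ β : ℝ}

lemma le_mul_of_isMinOn_prox_objective (hderiv : HasDerivWithinAt ψ d (Ici 0) 0)
    (hmin : IsMinOn (fun t => δ * ψ t + 1 / 2 * (t - β) ^ 2) (Ici 0) 0) : β ≤ δ * d := by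
  have hquad : HasDerivAt (fun t : ℝ => 1 / 2 * (t - β) ^ 2) (-β) 0 := by
    simpa using (((hasDerivAt_id (0 : ℝ)).sub_const β).pow 2).const_mul (1 / 2 : ℝ)
  have := hmin.nonneg_of_hasDerivWithinAt_Ici
    ((hderiv.const_mul δ).add hquad.hasDerivWithinAt)
  linarith

lemma prox_objective_zero_le (hδ : 0 ≤ δ) (hcone : ∀ t, ψ 0 + d * |t| ≤ ψ t)
    (hβ : |β| ≤ δ * d) (t : ℝ) :
    δ * ψ 0 + 1 / 2 * (0 - β) ^ 2 ≤ δ * ψ t + 1 / 2 * (t - β) ^ 2 := by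
  have hβt : β * t ≤ δ * d * |t| :=
    calc β * t ≤ |β| * |t| := by rw [← abs_mul]; exact le_abs_self _
      _ ≤ δ * d * |t| := mul_le_mul_of_nonneg_right hβ (abs_nonneg t)
  have hψ : δ * (ψ 0 + d * |t|) ≤ δ * ψ t := mul_le_mul_of_nonneg_left (hcone t) hδ
  nlinarith [sq_nonneg t]

end ProxObjective

theorem prox_eq_zero_iff_general (ψ : ℝ → ℝ)
    (hconv : ConvexOn ℝ Set.univ ψ)
    (heven : ∀ t, ψ (-t) = ψ t)
    (d : ℝ)
    (hderiv : HasDerivWithinAt ψ d (Set.Ici (0 : ℝ)) 0)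
    (δ : ℝ) (hδ : 0 < δ) (β : ℝ) (αhat : ℝ)
    (hmin : ∀ t : ℝ,
      δ * ψ αhat + (1 / 2) * (αhat - β) ^ 2 ≤ δ * ψ t + (1 / 2) * (t - β) ^ 2)
    (huniq : ∀ α : ℝ,
      (∀ t : ℝ, δ * ψ α + (1 / 2) * (α - β) ^ 2 ≤ δ * ψ t + (1 / 2) * (t - β) ^ 2) →
      α = αhat) :
    αhat = 0 ↔ |β| ≤ δ * d := by
  constructor
  · rintro rfl
    have hneg : IsMinOn (fun t => δ * ψ t + 1 / 2 * (t - -β) ^ 2) (Ici 0) 0 := fun t _ =>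
      calc δ * ψ 0 + 1 / 2 * (0 - -β) ^ 2 = δ * ψ 0 + 1 / 2 * (0 - β) ^ 2 := by ring
        _ ≤ δ * ψ (-t) + 1 / 2 * (-t - β) ^ 2 := hmin (-t)
        _ = δ * ψ t + 1 / 2 * (t - -β) ^ 2 := by rw [heven]; ring
    exact abs_le.2 ⟨by linarith [le_mul_of_isMinOn_prox_objective hderiv hneg],
      le_mul_of_isMinOn_prox_objective hderiv fun t _ => hmin t⟩
  · intro hβ
    exact (huniq 0 (prox_objective_zero_le hδ.le
      (hconv.add_mul_abs_le_of_even heven hderiv) hβ)).symm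

/-- Thresholding characterization (Theorem 2 of the paper): with `ψ` convex,
even, nonnegative, nondecreasing on `[0, ∞)`, continuous, `ψ(0) = 0`, and
right derivative `d = ψ′₊(0) > 0`, the unique minimizer `α̂` of
`α ↦ δψ(α) + (1/2)(α − β)²` vanishes iff `|β| ≤ δ·d`. -/
theorem prox_eq_zero_iff (ψ : ℝ → ℝ)
    (hconv : ConvexOn ℝ Set.univ ψ)
    (heven : ∀ t, ψ (-t) = ψ t)
    (hnonneg : ∀ t, 0 ≤ ψ t)
    (hmono : MonotoneOn ψ (Set.Ici (0 : ℝ)))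
    (hcont : Continuous ψ)
    (hzero : ψ 0 = 0)
    (d : ℝ) (hd : 0 < d)
    (hderiv : HasDerivWithinAt ψ d (Set.Ici (0 : ℝ)) 0)
    (δ : ℝ) (hδ : 0 < δ) (β : ℝ) (αhat : ℝ)
    (hmin : ∀ t : ℝ,
      δ * ψ αhat + (1 / 2) * (αhat - β) ^ 2 ≤ δ * ψ t + (1 / 2) * (t - β) ^ 2)
    (huniq : ∀ α : ℝ,
      (∀ t : ℝ, δ * ψ α + (1 / 2) * (α - β) ^ 2 ≤ δ * ψ t + (1 / 2) * (t - β) ^ 2) →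
      α = αhat) :
    αhat = 0 ↔ |β| ≤ δ * d :=
  prox_eq_zero_iff_general ψ hconv heven d hderiv δ hδ β αhat hmin huniq
end

section
/- Let ψ : ℝ → ℝ be convex, even, nonnegative, nondecreasing on [0, ∞), continuous, with ψ(0) = 0, twice differentiable on ℝ \ {0}, and with right derivative d = ψ′₊(0) > 0 at 0. Let δ > 0, β ∈ ℝ with |β| > δ·d, and let α̂ be the unique minimizer of α ↦ δψ(α) + (1/2)(α − β)². Then α̂ ≠ 0, α̂ has the same sign as β, and α̂ satisfies α̂ = β − δψ′(α̂). -/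
/-!
Writing `F(t) = δ ψ(t) + (t - β)² / 2`, the right derivative of `F` at `0` is `δ d - β`, so `0`
can minimize `F` only if `β ≤ δ d`; since `ψ` is even, `t ↦ F(-t)` is the objective for `-β`,
which gives `-β ≤ δ d` as well. The same symmetry gives `F(-t) = F(t) + 2 t β`, so a minimizer
cannot have the sign opposite to `β`. Away from `0` the objective is differentiable and Fermat's
rule is the stationarity equation.
-/

open Set

theorem IsLocalMinOn.hasDerivWithinAt_Ici_nonneg {f : ℝ → ℝ} {a f' : ℝ}
    (h : IsLocalMinOn f (Ici a) a) (hf : HasDerivWithinAt f f' (Ici a) a) : 0 ≤ f' := by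
  have hone : (1 : ℝ) ∈ posTangentConeAt (Ici a) a :=
    mem_posTangentConeAt_of_segment_subset <| by
      rw [segment_eq_Icc (by linarith)]
      exact Icc_subset_Ici_self
  simpa using h.hasFDerivWithinAt_nonneg hf.hasFDerivWithinAt hone

/-- `prox_{δψ}(β)` is the minimizer of `proxObjective δ ψ β`. -/
noncomputable def proxObjective (δ : ℝ) (ψ : ℝ → ℝ) (β t : ℝ) : ℝ :=
  δ * ψ t + 1 / 2 * (t - β) ^ 2

section proxObjective

variable {δ : ℝ} {ψ : ℝ → ℝ} {β : ℝ}

theorem HasDerivWithinAt.proxObjective {p : ℝ} {s : Set ℝ} {x : ℝ}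
    (hψ : HasDerivWithinAt ψ p s x) :
    HasDerivWithinAt (proxObjective δ ψ β) (δ * p + (x - β)) s x := by
  have hsq : HasDerivAt (fun t ↦ 1 / 2 * (t - β) ^ 2) (x - β) x := by
    simpa using (hasDerivAt_id x |>.sub_const β |>.fun_pow 2 |>.const_mul (1 / 2 : ℝ))
  exact (hψ.const_mul δ).add hsq.hasDerivWithinAt

theorem HasDerivAt.proxObjective {p x : ℝ} (hψ : HasDerivAt ψ p x) :
    HasDerivAt (proxObjective δ ψ β) (δ * p + (x - β)) x := by
  simpa only [hasDerivWithinAt_univ] using hψ.hasDerivWithinAt.proxObjective (s := univ)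

theorem proxObjective_neg_neg (heven : ψ.Even) (t : ℝ) :
    proxObjective δ ψ (-β) (-t) = proxObjective δ ψ β t := by
  simp only [proxObjective, heven t]
  ring

theorem proxObjective_neg (heven : ψ.Even) (t : ℝ) :
    proxObjective δ ψ β (-t) = proxObjective δ ψ β t + 2 * t * β := by
  simp only [proxObjective, heven t]
  ring

theorem IsMinOn.proxObjective_neg {α : ℝ} (heven : ψ.Even)
    (h : IsMinOn (proxObjective δ ψ β) univ α) :
    IsMinOn (proxObjective δ ψ (-β)) univ (-α) := fun t _ ↦ by
  rw [mem_ofPred_eq, proxObjective_neg_neg heven, ← neg_neg t, proxObjective_neg_neg heven]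
  exact h (mem_univ _)

theorem le_of_isMinOn_proxObjective_zero {d : ℝ} (hψ : HasDerivWithinAt ψ d (Ici 0) 0)
    (h : IsMinOn (proxObjective δ ψ β) univ 0) : β ≤ δ * d := by
  have hslope := IsLocalMinOn.hasDerivWithinAt_Ici_nonneg (h.on_subset (subset_univ _)).localize
    hψ.proxObjective
  linarith

theorem abs_le_of_isMinOn_proxObjective_zero {d : ℝ} (heven : ψ.Even)
    (hψ : HasDerivWithinAt ψ d (Ici 0) 0) (h : IsMinOn (proxObjective δ ψ β) univ 0) :
    |β| ≤ δ * d := by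
  have hneg : -β ≤ δ * d := by
    refine le_of_isMinOn_proxObjective_zero hψ ?_
    simpa only [neg_zero] using h.proxObjective_neg heven
  exact abs_le.2 ⟨by linarith, le_of_isMinOn_proxObjective_zero hψ h⟩

theorem mul_nonneg_of_isMinOn_proxObjective {α : ℝ} (heven : ψ.Even)
    (h : IsMinOn (proxObjective δ ψ β) univ α) : 0 ≤ α * β := by
  have hreflect := h (mem_univ (-α))
  simp only [mem_ofPred_eq, proxObjective_neg heven] at hreflect
  linarith

theorem eq_sub_of_isMinOn_proxObjective {α p : ℝ} (hψ : HasDerivAt ψ p α)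
    (h : IsMinOn (proxObjective δ ψ β) univ α) : α = β - δ * p := by
  have hfermat := (h.isLocalMin Filter.univ_mem).hasDerivAt_eq_zero hψ.proxObjective
  linarith

end proxObjective

theorem prox_above_threshold_general (ψ ψ' : ℝ → ℝ)
    (heven : ∀ t, ψ (-t) = ψ t)
    (hderiv1 : ∀ x : ℝ, x ≠ 0 → HasDerivAt ψ (ψ' x) x)
    (d : ℝ) (hd : 0 < d)
    (hrderiv : HasDerivWithinAt ψ d (Set.Ici (0 : ℝ)) 0)
    (δ : ℝ) (hδ : 0 < δ) (β : ℝ) (hβ : δ * d < |β|) (αhat : ℝ)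
    (hmin : ∀ t : ℝ,
      δ * ψ αhat + (1 / 2) * (αhat - β) ^ 2 ≤ δ * ψ t + (1 / 2) * (t - β) ^ 2) :
    αhat ≠ 0 ∧ 0 < αhat * β ∧ αhat = β - δ * ψ' αhat := by
  have hmin' : IsMinOn (proxObjective δ ψ β) univ αhat := fun t _ ↦ hmin t
  have hαhat : αhat ≠ 0 := by
    rintro rfl
    exact (abs_le_of_isMinOn_proxObjective_zero heven hrderiv hmin').not_gt hβ
  have hβ0 : β ≠ 0 := by
    rintro rfl
    rw [abs_zero] at hβ
    exact (mul_pos hδ hd).not_gt hβ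
  exact ⟨hαhat,
    (mul_nonneg_of_isMinOn_proxObjective heven hmin').lt_of_ne (mul_ne_zero hαhat hβ0).symm,
    eq_sub_of_isMinOn_proxObjective (hderiv1 αhat hαhat) hmin'⟩

/-- Stationarity above the threshold (Theorem 2 of the paper): with `ψ`
convex, even, nonnegative, nondecreasing on `[0, ∞)`, continuous, `ψ(0) = 0`,
twice differentiable away from `0`, and right derivative `d = ψ′₊(0) > 0`,
if `|β| > δ·d` then the unique minimizer `α̂` of `α ↦ δψ(α) + (1/2)(α − β)²`
is nonzero, has the same sign as `β`, and satisfies `α̂ = β − δψ′(α̂)`. -/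
theorem prox_above_threshold (ψ ψ' ψ'' : ℝ → ℝ)
    (hconv : ConvexOn ℝ Set.univ ψ)
    (heven : ∀ t, ψ (-t) = ψ t)
    (hnonneg : ∀ t, 0 ≤ ψ t)
    (hmono : MonotoneOn ψ (Set.Ici (0 : ℝ)))
    (hcont : Continuous ψ)
    (hzero : ψ 0 = 0)
    (hderiv1 : ∀ x : ℝ, x ≠ 0 → HasDerivAt ψ (ψ' x) x)
    (hderiv2 : ∀ x : ℝ, x ≠ 0 → HasDerivAt ψ' (ψ'' x) x)
    (d : ℝ) (hd : 0 < d)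
    (hrderiv : HasDerivWithinAt ψ d (Set.Ici (0 : ℝ)) 0)
    (δ : ℝ) (hδ : 0 < δ) (β : ℝ) (hβ : δ * d < |β|) (αhat : ℝ)
    (hmin : ∀ t : ℝ,
      δ * ψ αhat + (1 / 2) * (αhat - β) ^ 2 ≤ δ * ψ t + (1 / 2) * (t - β) ^ 2)
    (huniq : ∀ α : ℝ,
      (∀ t : ℝ, δ * ψ α + (1 / 2) * (α - β) ^ 2 ≤ δ * ψ t + (1 / 2) * (t - β) ^ 2) →
      α = αhat) :
    αhat ≠ 0 ∧ 0 < αhat * β ∧ αhat = β - δ * ψ' αhat :=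
  prox_above_threshold_general ψ ψ' heven hderiv1 d hd hrderiv δ hδ β hβ αhat hmin
end

section
/- Let Φ : ℝ^L → ℝⁿ be a linear map satisfying Φ ∘ Φᵀ = A·Id_{ℝⁿ} for some A > 0 (a tight frame synthesis operator), let C ⊆ ℝⁿ be a nonempty closed convex set, and let C′ = {α ∈ ℝ^L : Φα ∈ C}. Then for every α ∈ ℝ^L, the point P_{C′}(α) = α + A⁻¹Φᵀ(P_C(Φα) − Φα) = A⁻¹Φᵀ(P_C(Φα)) + (Id − A⁻¹ΦᵀΦ)(α) is the unique nearest point of C′ to α in the Euclidean norm, where P_C denotes the metric projection onto C. -/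
/-!
The candidate `β = α + A⁻¹Φᵀ(P_C(Φα) − Φα)` satisfies `Φβ = P_C(Φα)`, so `β ∈ C′`. Moving the
adjoint across the inner product turns the variational inequality characterising `β` as the
projection onto `C′`, `⟪α − β, c − β⟫ ≤ 0`, into `A⁻¹` times the one characterising `P_C(Φα)`,
`⟪Φα − P_C(Φα), Φc − P_C(Φα)⟫ ≤ 0`. The variational inequality gives
`‖α − β‖² + ‖c − β‖² ≤ ‖α − c‖²`, hence both minimality and uniqueness.
-/

open ContinuousLinearMap

section NearestPoint

variable {F : Type*} [NormedAddCommGroup F] [InnerProductSpace ℝ F]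

theorem Convex.real_inner_sub_le_zero_of_forall_norm_sub_le {K : Set F} (hK : Convex ℝ K)
    {u v : F} (hv : v ∈ K) (hmin : ∀ w ∈ K, ‖u - v‖ ≤ ‖u - w‖) :
    ∀ w ∈ K, inner ℝ (u - v) (w - v) ≤ 0 := by
  have : Nonempty K := ⟨⟨v, hv⟩⟩
  refine (norm_eq_iInf_iff_real_inner_le_zero hK hv).mp (le_antisymm ?_ ?_)
  · exact le_ciInf fun w => hmin w w.2
  · exact ciInf_le ⟨0, Set.forall_mem_range.2 fun _ => norm_nonneg _⟩ (⟨v, hv⟩ : K)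

theorem norm_sub_sq_add_norm_sub_sq_le_of_real_inner_le_zero {u v w : F}
    (h : inner ℝ (u - v) (w - v) ≤ 0) : ‖u - v‖ ^ 2 + ‖w - v‖ ^ 2 ≤ ‖u - w‖ ^ 2 := by
  have hsplit : u - w = (u - v) - (w - v) := by abel
  rw [hsplit, norm_sub_sq_real (u - v)]
  linarith

theorem forall_norm_sub_le_and_eq_of_real_inner_le_zero {K : Set F} {u v : F}
    (h : ∀ w ∈ K, inner ℝ (u - v) (w - v) ≤ 0) :
    ∀ w ∈ K, ‖u - v‖ ≤ ‖u - w‖ ∧ (‖u - v‖ = ‖u - w‖ → w = v) := by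
  intro w hw
  have hsq := norm_sub_sq_add_norm_sub_sq_le_of_real_inner_le_zero (h w hw)
  have hw_sq : 0 ≤ ‖w - v‖ ^ 2 := sq_nonneg _
  refine ⟨(pow_le_pow_iff_left₀ (norm_nonneg _) (norm_nonneg _) two_ne_zero).1 (by linarith),
    fun heq => ?_⟩
  rw [heq] at hsq
  exact norm_sub_eq_zero_iff.1 (pow_eq_zero_iff two_ne_zero |>.1 (by linarith))

end NearestPoint

section TightFrame

variable {E F : Type*} [NormedAddCommGroup E] [InnerProductSpace ℝ E] [CompleteSpace E]
  [NormedAddCommGroup F] [InnerProductSpace ℝ F] [CompleteSpace F]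
  {Φ : E →L[ℝ] F} {A : ℝ}

theorem apply_adjoint_apply_of_comp_adjoint_eq_smul
    (hframe : Φ.comp (adjoint Φ) = A • ContinuousLinearMap.id ℝ F) (v : F) :
    Φ (adjoint Φ v) = A • v := by
  simpa using DFunLike.congr_fun hframe v

theorem apply_add_inv_smul_adjoint_sub (hA : A ≠ 0)
    (hframe : Φ.comp (adjoint Φ) = A • ContinuousLinearMap.id ℝ F) (α : E) (p : F) :
    Φ (α + A⁻¹ • adjoint Φ (p - Φ α)) = p := by
  rw [map_add, map_smul, apply_adjoint_apply_of_comp_adjoint_eq_smul hframe, smul_smul,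
    inv_mul_cancel₀ hA, one_smul, add_sub_cancel]

theorem real_inner_sub_add_inv_smul_adjoint_sub (hA : A ≠ 0)
    (hframe : Φ.comp (adjoint Φ) = A • ContinuousLinearMap.id ℝ F) (α c : E) (p : F) :
    inner ℝ (α - (α + A⁻¹ • adjoint Φ (p - Φ α))) (c - (α + A⁻¹ • adjoint Φ (p - Φ α))) =
      A⁻¹ * inner ℝ (Φ α - p) (Φ c - p) := by
  have hdiff : α - (α + A⁻¹ • adjoint Φ (p - Φ α)) = A⁻¹ • adjoint Φ (Φ α - p) := by
    rw [sub_add_cancel_left, map_sub, map_sub, smul_sub, smul_sub, neg_sub]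
  rw [hdiff, real_inner_smul_left, adjoint_inner_left, map_sub,
    apply_add_inv_smul_adjoint_sub hA hframe]

end TightFrame

theorem proj_preimage_tight_frame_general (n L : ℕ)
    (Φ : EuclideanSpace ℝ (Fin L) →L[ℝ] EuclideanSpace ℝ (Fin n))
    (A : ℝ) (hA : 0 < A)
    (hframe : Φ.comp (ContinuousLinearMap.adjoint Φ) =
      A • ContinuousLinearMap.id ℝ (EuclideanSpace ℝ (Fin n)))
    (C : Set (EuclideanSpace ℝ (Fin n)))
    (hCconvex : Convex ℝ C)
    (PC : EuclideanSpace ℝ (Fin n) → EuclideanSpace ℝ (Fin n))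
    (hPC : ∀ x, PC x ∈ C ∧ ∀ c ∈ C, ‖x - PC x‖ ≤ ‖x - c‖)
    (α : EuclideanSpace ℝ (Fin L)) :
    α + A⁻¹ • ContinuousLinearMap.adjoint Φ (PC (Φ α) - Φ α) =
      A⁻¹ • ContinuousLinearMap.adjoint Φ (PC (Φ α)) +
        (α - A⁻¹ • ContinuousLinearMap.adjoint Φ (Φ α)) ∧
    α + A⁻¹ • ContinuousLinearMap.adjoint Φ (PC (Φ α) - Φ α) ∈ {β | Φ β ∈ C} ∧
    (∀ c ∈ {β : EuclideanSpace ℝ (Fin L) | Φ β ∈ C},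
      ‖α - (α + A⁻¹ • ContinuousLinearMap.adjoint Φ (PC (Φ α) - Φ α))‖ ≤ ‖α - c‖ ∧
      (‖α - (α + A⁻¹ • ContinuousLinearMap.adjoint Φ (PC (Φ α) - Φ α))‖ = ‖α - c‖ →
        c = α + A⁻¹ • ContinuousLinearMap.adjoint Φ (PC (Φ α) - Φ α))) := by
  obtain ⟨hPC_mem, hPC_min⟩ := hPC (Φ α)
  have hΦβ := apply_add_inv_smul_adjoint_sub hA.ne' hframe α (PC (Φ α))
  refine ⟨by rw [map_sub, smul_sub]; abel, by rw [Set.mem_ofPred_eq, hΦβ]; exact hPC_mem, ?_⟩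
  refine forall_norm_sub_le_and_eq_of_real_inner_le_zero fun c (hc : Φ c ∈ C) => ?_
  rw [real_inner_sub_add_inv_smul_adjoint_sub hA.ne' hframe]
  exact mul_nonpos_of_nonneg_of_nonpos (inv_nonneg.2 hA.le)
    (hCconvex.real_inner_sub_le_zero_of_forall_norm_sub_le hPC_mem hPC_min _ hc)

/-- Projection onto `C′ = Φ⁻¹(C)` for a tight frame synthesis operator `Φ`
(with `Φ Φᵀ = A·Id`, `A > 0`): the point
`P_{C′}(α) = α + A⁻¹Φᵀ(P_C(Φα) − Φα) = A⁻¹Φᵀ(P_C(Φα)) + (Id − A⁻¹ΦᵀΦ)(α)`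
is the unique nearest point of `C′` to `α`, where `P_C` is the metric
projection onto the nonempty closed convex set `C`. -/
theorem proj_preimage_tight_frame (n L : ℕ)
    (Φ : EuclideanSpace ℝ (Fin L) →L[ℝ] EuclideanSpace ℝ (Fin n))
    (A : ℝ) (hA : 0 < A)
    (hframe : Φ.comp (ContinuousLinearMap.adjoint Φ) =
      A • ContinuousLinearMap.id ℝ (EuclideanSpace ℝ (Fin n)))
    (C : Set (EuclideanSpace ℝ (Fin n)))
    (hCne : C.Nonempty) (hCclosed : IsClosed C) (hCconvex : Convex ℝ C)
    (PC : EuclideanSpace ℝ (Fin n) → EuclideanSpace ℝ (Fin n))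
    (hPC : ∀ x, PC x ∈ C ∧ ∀ c ∈ C, ‖x - PC x‖ ≤ ‖x - c‖)
    (α : EuclideanSpace ℝ (Fin L)) :
    α + A⁻¹ • ContinuousLinearMap.adjoint Φ (PC (Φ α) - Φ α) =
      A⁻¹ • ContinuousLinearMap.adjoint Φ (PC (Φ α)) +
        (α - A⁻¹ • ContinuousLinearMap.adjoint Φ (Φ α)) ∧
    α + A⁻¹ • ContinuousLinearMap.adjoint Φ (PC (Φ α) - Φ α) ∈ {β | Φ β ∈ C} ∧
    (∀ c ∈ {β : EuclideanSpace ℝ (Fin L) | Φ β ∈ C},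
      ‖α - (α + A⁻¹ • ContinuousLinearMap.adjoint Φ (PC (Φ α) - Φ α))‖ ≤ ‖α - c‖ ∧
      (‖α - (α + A⁻¹ • ContinuousLinearMap.adjoint Φ (PC (Φ α) - Φ α))‖ = ‖α - c‖ →
        c = α + A⁻¹ • ContinuousLinearMap.adjoint Φ (PC (Φ α) - Φ α))) :=
  proj_preimage_tight_frame_general n L Φ A hA hframe C hCconvex PC hPC α
end

section
/- Let f₁ : ℝ^L → ℝ be convex and differentiable with κ-Lipschitz gradient (κ > 0), let f₂ : ℝ^L → ℝ be convex and continuous, and suppose the set M of minimizers of f₁ + f₂ is nonempty. Let (μ_t)_{t≥0} satisfy 0 < inf_t μ_t ≤ sup_t μ_t < 2/κ, fix α₀ ∈ ℝ^L, and for each t ≥ 0 let α_{t+1} be the unique minimizer of x ↦ μ_t f₂(x) + (1/2)‖x − (α_t − μ_t ∇f₁(α_t))‖². Then the sequence (α_t) converges to some element of M. -/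
/-!
Minimizers of `f₁ + f₂` are the points `z` with `-∇f₁ z ∈ ∂f₂ z`, and a prox step is a
subgradient step read backwards: `μ⁻¹ (β - prox_{μ f₂} β) ∈ ∂f₂ (prox_{μ f₂} β)`. By the
Baillon–Haddad theorem `∇f₁` is `1/κ`-cocoercive, and combined with the monotonicity of `∂f₂`
this gives, for every minimizer `z`,
`‖α_{t+1} - z‖² + (1 - μ_t κ / 2) ‖α_t - α_{t+1}‖² ≤ ‖α_t - z‖²`.
So the iterates stay bounded and `α_t - α_{t+1} → 0`. In finite dimension some subsequence
converges, its limit is a minimizer because the graph of `∂f₂` is closed, and Fejér monotonicity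
with respect to that limit makes the whole sequence converge to it.
-/

open Filter Set Topology
open scoped NNReal RealInnerProductSpace

section SubgradientCalculus

variable {E : Type*} [NormedAddCommGroup E] [InnerProductSpace ℝ E]

def HasSubgradientAt (f : E → ℝ) (v x : E) : Prop :=
  ∀ y, f x + ⟪v, y - x⟫ ≤ f y

/-- `p = prox_{μ f} β`. -/
def IsProx (f : E → ℝ) (μ : ℝ) (β p : E) : Prop :=
  ∀ x, μ * f p + (1 / 2) * ‖p - β‖ ^ 2 ≤ μ * f x + (1 / 2) * ‖x - β‖ ^ 2

theorem HasSubgradientAt.inner_sub_nonneg {f : E → ℝ} {u v x y : E}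
    (hx : HasSubgradientAt f u x) (hy : HasSubgradientAt f v y) : 0 ≤ ⟪u - v, x - y⟫ := by
  have hxy := hx y
  have hyx := hy x
  rw [← neg_sub x y, inner_neg_right] at hxy
  rw [inner_sub_left]
  linarith

theorem hasSubgradientAt_of_tendsto {ι : Type*} {l : Filter ι} [l.NeBot] {f : E → ℝ}
    (hf : Continuous f) {v x : ι → E} {v₀ x₀ : E} (hv : Tendsto v l (𝓝 v₀))
    (hx : Tendsto x l (𝓝 x₀)) (h : ∀ᶠ i in l, HasSubgradientAt f (v i) (x i)) :
    HasSubgradientAt f v₀ x₀ := fun y =>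
  le_of_tendsto (((hf.tendsto x₀).comp hx).add (hv.inner (tendsto_const_nhds.sub hx)))
    (h.mono fun _ hi => hi y)

variable [CompleteSpace E]

theorem HasGradientAt.hasLineDerivAt {f : E → ℝ} {g x : E} (h : HasGradientAt f g x) (v : E) :
    HasLineDerivAt ℝ f ⟪g, v⟫ x v := by
  simpa using (hasGradientAt_iff_hasFDerivAt.1 h).hasLineDerivAt v

theorem HasGradientAt.hasDerivAt_comp_add_smul {f : E → ℝ} {g x v : E} {s : ℝ}
    (h : HasGradientAt f g (x + s • v)) : HasDerivAt (fun s : ℝ => f (x + s • v)) ⟪g, v⟫ s := by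
  have hline : HasDerivAt (fun s : ℝ => x + s • v) v s := by
    simpa using ((hasDerivAt_id s).smul_const v).const_add x
  rw [← InnerProductSpace.toDual_apply_apply]
  exact (hasGradientAt_iff_hasFDerivAt.1 h).comp_hasDerivAt s hline

theorem hasGradientAt_half_sq_norm_sub (β p : E) :
    HasGradientAt (fun x => (1 / 2) * ‖x - β‖ ^ 2) (p - β) p := by
  rw [hasGradientAt_iff_hasFDerivAt]
  refine ((((hasFDerivAt_id p).sub_const β).norm_sq).const_mul (1 / 2 : ℝ)).congr_fderiv ?_
  ext v
  simp

theorem ConvexOn.hasSubgradientAt_of_hasGradientAt {f : E → ℝ} (hf : ConvexOn ℝ univ f)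
    {g x : E} (h : HasGradientAt f g x) : HasSubgradientAt f g x := by
  intro y
  have hslope : ∀ᶠ s in 𝓝[>] (0 : ℝ), s⁻¹ • (f (x + s • (y - x)) - f x) ≤ f y - f x := by
    filter_upwards [Ioc_mem_nhdsGT one_pos] with s ⟨hs0, hs1⟩
    have hc := hf.2 (mem_univ y) (mem_univ x) hs0.le (sub_nonneg.2 hs1) (add_sub_cancel s 1)
    rw [show s • y + (1 - s) • x = x + s • (y - x) by module] at hc
    simp only [smul_eq_mul] at hc
    rw [smul_eq_mul, inv_mul_le_iff₀ hs0]
    linarith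
  linarith [le_of_tendsto (h.hasLineDerivAt (y - x)).tendsto_slope_zero_right hslope]

theorem ConvexOn.hasSubgradientAt_neg_of_forall_add_le {h φ : E → ℝ} (hφ : ConvexOn ℝ univ φ)
    {g p : E} (hh : HasGradientAt h g p) (hmin : ∀ y, h p + φ p ≤ h y + φ y) :
    HasSubgradientAt φ (-g) p := by
  intro y
  have hslope : ∀ᶠ s in 𝓝[>] (0 : ℝ), φ p - φ y ≤ s⁻¹ • (h (p + s • (y - p)) - h p) := by
    filter_upwards [Ioc_mem_nhdsGT one_pos] with s ⟨hs0, hs1⟩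
    have hc := hφ.2 (mem_univ y) (mem_univ p) hs0.le (sub_nonneg.2 hs1) (add_sub_cancel s 1)
    rw [show s • y + (1 - s) • p = p + s • (y - p) by module] at hc
    simp only [smul_eq_mul] at hc
    rw [smul_eq_mul, le_inv_mul_iff₀ hs0]
    linarith [hmin (p + s • (y - p))]
  rw [inner_neg_left]
  linarith [ge_of_tendsto (hh.hasLineDerivAt (y - p)).tendsto_slope_zero_right hslope]

theorem ConvexOn.forall_add_le_iff_hasSubgradientAt_neg {f₁ f₂ : E → ℝ}
    (h₁ : ConvexOn ℝ univ f₁) (h₂ : ConvexOn ℝ univ f₂) {g z : E} (hg : HasGradientAt f₁ g z) :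
    (∀ y, f₁ z + f₂ z ≤ f₁ y + f₂ y) ↔ HasSubgradientAt f₂ (-g) z := by
  refine ⟨h₂.hasSubgradientAt_neg_of_forall_add_le hg, fun h y => ?_⟩
  have h₁y := h₁.hasSubgradientAt_of_hasGradientAt hg y
  have h₂y := h y
  rw [inner_neg_left] at h₂y
  linarith

theorem ConvexOn.hasSubgradientAt_of_isProx {f : E → ℝ} (hf : ConvexOn ℝ univ f) {μ : ℝ}
    (hμ : 0 < μ) {β p : E} (hp : IsProx f μ β p) : HasSubgradientAt f (μ⁻¹ • (β - p)) p := by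
  intro y
  have h := (hf.smul hμ.le).hasSubgradientAt_neg_of_forall_add_le
    (hasGradientAt_half_sq_norm_sub β p) (fun x => by simp only [smul_eq_mul]; linarith [hp x]) y
  rw [neg_sub] at h
  rw [real_inner_smul_left, ← mul_le_mul_iff_right₀ hμ, mul_add, ← mul_assoc,
    mul_inv_cancel₀ hμ.ne', one_mul]
  simpa using h

end SubgradientCalculus

section LipschitzGradient

variable {E : Type*} [NormedAddCommGroup E] [InnerProductSpace ℝ E] [CompleteSpace E]

theorem le_add_inner_gradient_add_of_lipschitzWith {f : E → ℝ}
    (hf : Differentiable ℝ f) {K : ℝ≥0} (hK : LipschitzWith K (gradient f)) (x y : E) :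
    f y ≤ f x + ⟪gradient f x, y - x⟫ + K / 2 * ‖y - x‖ ^ 2 := by
  set v := y - x
  have hderiv (s : ℝ) :
      HasDerivAt (fun s : ℝ => f (x + s • v)) ⟪gradient f (x + s • v), v⟫ s :=
    (hf _).hasGradientAt.hasDerivAt_comp_add_smul
  have hbound (s : ℝ) (hs : s ∈ Ico (0 : ℝ) 1) :
      ⟪gradient f (x + s • v), v⟫ ≤ ⟪gradient f x, v⟫ + K * s * ‖v‖ ^ 2 := by
    have hlip : ‖gradient f (x + s • v) - gradient f x‖ ≤ K * (s * ‖v‖) := by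
      simpa [dist_eq_norm, norm_smul, abs_of_nonneg hs.1] using hK.dist_le_mul (x + s • v) x
    have := (real_inner_le_norm (gradient f (x + s • v) - gradient f x) v).trans
      (mul_le_mul_of_nonneg_right hlip (norm_nonneg v))
    rw [inner_sub_left] at this
    linarith
  have hquad (s : ℝ) :
      HasDerivAt (fun s : ℝ => f x + s * ⟪gradient f x, v⟫ + K / 2 * s ^ 2 * ‖v‖ ^ 2)
        (⟪gradient f x, v⟫ + K * s * ‖v‖ ^ 2) s := by
    have := (((hasDerivAt_id s).mul_const ⟪gradient f x, v⟫).const_add (f x)).add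
      (((hasDerivAt_pow 2 s).const_mul (K / 2 : ℝ)).mul_const (‖v‖ ^ 2))
    exact this.congr_deriv
      (by simp only [Nat.cast_ofNat, Nat.add_one_sub_one, pow_one, one_mul]; ring)
  have := image_le_of_deriv_right_le_deriv_boundary
    (fun s _ => (hderiv s).continuousAt.continuousWithinAt)
    (fun s _ => (hderiv s).hasDerivWithinAt) (by simp)
    (fun s _ => (hquad s).continuousAt.continuousWithinAt)
    (fun s _ => (hquad s).hasDerivWithinAt) hbound (right_mem_Icc.2 zero_le_one)
  simpa [v] using this

theorem ConvexOn.add_inner_gradient_add_sq_norm_le {f : E → ℝ}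
    (hconv : ConvexOn ℝ univ f) (hf : Differentiable ℝ f) {K : ℝ≥0} (hK0 : 0 < K)
    (hK : LipschitzWith K (gradient f)) (x y : E) :
    f x + ⟪gradient f x, y - x⟫ + ‖gradient f y - gradient f x‖ ^ 2 / (2 * K) ≤ f y := by
  set d := gradient f y - gradient f x
  have hK' : (0 : ℝ) < K := hK0
  have hx := hconv.hasSubgradientAt_of_hasGradientAt (hf x).hasGradientAt (y - (K : ℝ)⁻¹ • d)
  have hy := le_add_inner_gradient_add_of_lipschitzWith hf hK y (y - (K : ℝ)⁻¹ • d)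
  rw [show y - (K : ℝ)⁻¹ • d - x = (y - x) - (K : ℝ)⁻¹ • d by abel, inner_sub_right,
    real_inner_smul_right] at hx
  rw [sub_sub_cancel_left, inner_neg_right, real_inner_smul_right, norm_neg, norm_smul, mul_pow,
    Real.norm_eq_abs, sq_abs] at hy
  have hd : (K : ℝ)⁻¹ * ⟪gradient f y, d⟫ - (K : ℝ)⁻¹ * ⟪gradient f x, d⟫
      = (K : ℝ)⁻¹ * ‖d‖ ^ 2 := by
    rw [← mul_sub, ← inner_sub_left, real_inner_self_eq_norm_sq]
  have hK1 : (K : ℝ)⁻¹ * ‖d‖ ^ 2 = 2 * (‖d‖ ^ 2 / (2 * K)) := by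
    field_simp
  have hK2 : (K : ℝ) / 2 * ((K : ℝ)⁻¹ ^ 2 * ‖d‖ ^ 2) = ‖d‖ ^ 2 / (2 * K) := by
    field_simp
  linarith

theorem ConvexOn.sq_norm_gradient_sub_le_inner {f : E → ℝ}
    (hconv : ConvexOn ℝ univ f) (hf : Differentiable ℝ f) {K : ℝ≥0} (hK0 : 0 < K)
    (hK : LipschitzWith K (gradient f)) (x y : E) :
    ‖gradient f x - gradient f y‖ ^ 2 ≤ K * ⟪gradient f x - gradient f y, x - y⟫ := by
  have hxy := hconv.add_inner_gradient_add_sq_norm_le hf hK0 hK x y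
  have hyx := hconv.add_inner_gradient_add_sq_norm_le hf hK0 hK y x
  have hK' : (0 : ℝ) < K := hK0
  have hhalf : ‖gradient f y - gradient f x‖ ^ 2 / K
      = 2 * (‖gradient f y - gradient f x‖ ^ 2 / (2 * K)) := by
    field_simp
  rw [← neg_sub x y, inner_neg_right] at hxy
  rw [norm_sub_rev] at hyx
  rw [norm_sub_rev, inner_sub_left, ← div_le_iff₀' hK']
  linarith

end LipschitzGradient

section ForwardBackward

variable {E : Type*} [NormedAddCommGroup E] [InnerProductSpace ℝ E]

theorem mul_one_sub_mul_sq_norm_add_le (q : ℝ) (a b : E) :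
    q * (1 - q) * ‖a + b‖ ^ 2 ≤ q * ‖a‖ ^ 2 + (1 - q) * ‖b‖ ^ 2 := by
  have h := sq_nonneg ‖q • a - (1 - q) • b‖
  rw [norm_sub_sq_real, norm_smul, norm_smul, inner_smul_left, inner_smul_right,
    Real.norm_eq_abs, Real.norm_eq_abs, mul_pow, mul_pow, sq_abs, sq_abs] at h
  rw [norm_add_sq_real]
  simp only [conj_trivial] at h
  nlinarith [h]

theorem forwardBackward_fejer_step {f : E → ℝ} {G : E → E} {κ μ : ℝ} (hκ : 0 < κ) (hμ : 0 < μ)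
    (hG : ∀ x y, ‖G x - G y‖ ^ 2 ≤ κ * ⟪G x - G y, x - y⟫) {x p z : E}
    (hp : HasSubgradientAt f (μ⁻¹ • (x - μ • G x - p)) p) (hz : HasSubgradientAt f (-G z) z) :
    ‖p - z‖ ^ 2 + (1 - μ * κ / 2) * ‖x - p‖ ^ 2 ≤ ‖x - z‖ ^ 2 := by
  set d := G x - G z
  set r := (x - p) - μ • d
  have hmono : 0 ≤ ⟪r, p - z⟫ := by
    have := hp.inner_sub_nonneg hz
    rw [show μ⁻¹ • (x - μ • G x - p) - -G z = μ⁻¹ • r by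
      simp only [r, d, smul_sub, inv_smul_smul₀ hμ.ne']; abel, real_inner_smul_left] at this
    exact nonneg_of_mul_nonneg_right (by linarith) (inv_pos.2 hμ)
  have hu : ‖r + (p - z)‖ ^ 2 = ‖x - z‖ ^ 2 - 2 * μ * ⟪d, x - z⟫ + μ ^ 2 * ‖d‖ ^ 2 := by
    rw [show r + (p - z) = (x - z) - μ • d by simp only [r]; abel, norm_sub_sq_real,
      real_inner_smul_right, norm_smul, mul_pow, Real.norm_eq_abs, sq_abs, real_inner_comm]
    ring
  have hsum : ‖r‖ ^ 2 + ‖p - z‖ ^ 2 ≤ ‖r + (p - z)‖ ^ 2 := by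
    rw [norm_add_sq_real]
    linarith
  -- With `q = μκ/2` we have `2qμ = κμ²`, so the `‖d‖²` terms are absorbed by cocoercivity.
  have hyoung := mul_one_sub_mul_sq_norm_add_le (μ * κ / 2) r (μ • d)
  rw [show r + μ • d = x - p by simp only [r]; abel, norm_smul, mul_pow, Real.norm_eq_abs,
    sq_abs] at hyoung
  have hcoco := mul_le_mul_of_nonneg_left (hG x z) (sq_nonneg μ)
  have hq : 0 < μ * κ / 2 := by positivity
  rw [← mul_le_mul_iff_right₀ hq]
  nlinarith [mul_le_mul_of_nonneg_left hsum hq.le]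

theorem tendsto_zero_of_forall_add_le {D e : ℕ → ℝ} (hD : ∀ t, 0 ≤ D t) (he : ∀ t, 0 ≤ e t)
    (h : ∀ t, D (t + 1) + e t ≤ D t) : Tendsto e atTop (𝓝 0) := by
  have htel (n : ℕ) : ∑ i ∈ Finset.range n, e i + D n ≤ D 0 := by
    induction n with
    | zero => simp
    | succ n ih => rw [Finset.sum_range_succ]; linarith [h n]
  exact (summable_of_sum_range_le he fun n => by linarith [htel n, hD n]).tendsto_atTop_zero

theorem tendsto_sub_succ_of_forall_sq_norm_add_le {F : Type*} [SeminormedAddCommGroup F]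
    {α : ℕ → F} {z : F} {η : ℝ} (hη : 0 < η)
    (h : ∀ t, ‖α (t + 1) - z‖ ^ 2 + η * ‖α t - α (t + 1)‖ ^ 2 ≤ ‖α t - z‖ ^ 2) :
    Tendsto (fun t => α t - α (t + 1)) atTop (𝓝 0) := by
  have := tendsto_zero_of_forall_add_le (fun t => sq_nonneg ‖α t - z‖)
    (fun t => mul_nonneg hη.le (sq_nonneg ‖α t - α (t + 1)‖)) h
  have hsq : Tendsto (fun t => ‖α t - α (t + 1)‖ ^ 2) atTop (𝓝 0) := by
    simpa [inv_mul_cancel_left₀ hη.ne'] using this.const_mul η⁻¹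
  rw [tendsto_zero_iff_norm_tendsto_zero]
  simpa using hsq.sqrt

theorem exists_tendsto_of_forall_dist_succ_le {X : Type*} [PseudoMetricSpace X] [ProperSpace X]
    {S : Set X} {x : ℕ → X} (hS : S.Nonempty)
    (hfejer : ∀ z ∈ S, ∀ t, dist (x (t + 1)) z ≤ dist (x t) z)
    (hcluster : ∀ a (φ : ℕ → ℕ), StrictMono φ → Tendsto (x ∘ φ) atTop (𝓝 a) → a ∈ S) :
    ∃ a ∈ S, Tendsto x atTop (𝓝 a) := by
  have hanti (z) (hz : z ∈ S) : Antitone fun t => dist (x t) z :=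
    antitone_nat_of_succ_le (hfejer z hz)
  obtain ⟨z, hz⟩ := hS
  obtain ⟨a, -, φ, hφ, hxφ⟩ := tendsto_subseq_of_bounded (Metric.isBounded_closedBall (x := z))
    fun t => Metric.mem_closedBall.2 (hanti z hz (Nat.zero_le t))
  have ha := hcluster a φ hφ hxφ
  refine ⟨a, ha, ?_⟩
  rw [tendsto_iff_dist_tendsto_zero] at hxφ ⊢
  exact (tendsto_iff_tendsto_subseq_of_antitone (hanti a ha) hφ.tendsto_atTop).2 hxφ

theorem exists_tendsto_forwardBackward [ProperSpace E] {f : E → ℝ}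
    (hconv : ConvexOn ℝ univ f) (hf : Continuous f) {G : E → E} (hGc : Continuous G) {κ : ℝ}
    (hκ : 0 < κ) (hG : ∀ x y, ‖G x - G y‖ ^ 2 ≤ κ * ⟪G x - G y, x - y⟫) {μ : ℕ → ℝ} {ε c : ℝ}
    (hε : 0 < ε) (hμε : ∀ t, ε ≤ μ t) (hμc : ∀ t, μ t ≤ c) (hc : c * κ < 2) {α : ℕ → E}
    (hα : ∀ t, IsProx f (μ t) (α t - μ t • G (α t)) (α (t + 1)))
    (hS : ∃ z, HasSubgradientAt f (-G z) z) :
    ∃ a, HasSubgradientAt f (-G a) a ∧ Tendsto α atTop (𝓝 a) := by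
  have hμ (t : ℕ) : 0 < μ t := hε.trans_le (hμε t)
  have hstep (t : ℕ) := hconv.hasSubgradientAt_of_isProx (hμ t) (hα t)
  set η := 1 - c * κ / 2 with hη
  have hfejer (z : E) (hz : HasSubgradientAt f (-G z) z) (t : ℕ) :
      ‖α (t + 1) - z‖ ^ 2 + η * ‖α t - α (t + 1)‖ ^ 2 ≤ ‖α t - z‖ ^ 2 := by
    have := forwardBackward_fejer_step hκ (hμ t) hG (hstep t) hz
    have : η ≤ 1 - μ t * κ / 2 := by nlinarith [hμc t]
    nlinarith [sq_nonneg ‖α t - α (t + 1)‖]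
  obtain ⟨z, hz⟩ := hS
  have hgap : Tendsto (fun t => α t - α (t + 1)) atTop (𝓝 0) :=
    tendsto_sub_succ_of_forall_sq_norm_add_le (by linarith) (hfejer z hz)
  refine exists_tendsto_of_forall_dist_succ_le (x := α) (S := {z | HasSubgradientAt f (-G z) z})
    ⟨z, hz⟩ (fun z hz t => ?_) fun a φ hφ hαφ => ?_
  · rw [dist_eq_norm, dist_eq_norm, ← sq_le_sq₀ (norm_nonneg _) (norm_nonneg _)]
    nlinarith [hfejer z hz t, sq_nonneg ‖α t - α (t + 1)‖]
  · have hgapφ := hgap.comp hφ.tendsto_atTop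
    have hμφ : IsBoundedUnder (· ≤ ·) atTop (norm ∘ fun k => (μ (φ k))⁻¹) :=
      isBoundedUnder_of ⟨ε⁻¹, fun k => by
        simpa [abs_of_pos (hμ (φ k))] using inv_anti₀ hε (hμε (φ k))⟩
    refine hasSubgradientAt_of_tendsto (l := atTop) hf (x := fun k => α (φ k + 1)) ?_ ?_
      (Eventually.of_forall fun k => hstep (φ k))
    · have hv (k : ℕ) : (μ (φ k))⁻¹ • (α (φ k) - μ (φ k) • G (α (φ k)) - α (φ k + 1))
          = (μ (φ k))⁻¹ • (α (φ k) - α (φ k + 1)) - G (α (φ k)) := by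
        rw [sub_right_comm, smul_sub, inv_smul_smul₀ (hμ _).ne']
      simp only [hv, ← zero_sub (G a)]
      exact (hμφ.smul_tendsto_zero hgapφ).sub ((hGc.tendsto a).comp hαφ)
    · simpa using hαφ.sub hgapφ

end ForwardBackward

/-- Convergence of the proximal backward–forward splitting iteration
(Theorem 1 of the paper): if `f₁` is convex differentiable with `κ`-Lipschitz
gradient, `f₂` is convex continuous, the set of minimizers of `f₁ + f₂` is
nonempty, and the step sizes satisfy `0 < inf μ_t ≤ sup μ_t < 2/κ`, then the
iterates `α_{t+1} = prox_{μ_t f₂}(α_t − μ_t ∇f₁(α_t))` converge to a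
minimizer of `f₁ + f₂`. -/
theorem forward_backward_converges (L : ℕ)
    (f₁ f₂ : EuclideanSpace ℝ (Fin L) → ℝ)
    (hf₁conv : ConvexOn ℝ Set.univ f₁) (hf₁diff : Differentiable ℝ f₁)
    (κ : ℝ) (hκ : 0 < κ)
    (hf₁lip : LipschitzWith (Real.toNNReal κ) (gradient f₁))
    (hf₂conv : ConvexOn ℝ Set.univ f₂) (hf₂cont : Continuous f₂)
    (hM : ∃ m : EuclideanSpace ℝ (Fin L), ∀ y, f₁ m + f₂ m ≤ f₁ y + f₂ y)
    (μ : ℕ → ℝ)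
    (hμ_below : ∃ ε > (0 : ℝ), ∀ t, ε ≤ μ t)
    (hμ_above : ∃ c : ℝ, c < 2 / κ ∧ ∀ t, μ t ≤ c)
    (α : ℕ → EuclideanSpace ℝ (Fin L))
    (hiter : ∀ t, ∀ x,
      μ t * f₂ (α (t + 1)) +
          (1 / 2) * ‖α (t + 1) - (α t - μ t • gradient f₁ (α t))‖ ^ 2 ≤
        μ t * f₂ x + (1 / 2) * ‖x - (α t - μ t • gradient f₁ (α t))‖ ^ 2) :
    ∃ a : EuclideanSpace ℝ (Fin L),
      (∀ y, f₁ a + f₂ a ≤ f₁ y + f₂ y) ∧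
      Filter.Tendsto α Filter.atTop (nhds a) := by
  obtain ⟨ε, hε, hμε⟩ := hμ_below
  obtain ⟨c, hc, hμc⟩ := hμ_above
  obtain ⟨m, hm⟩ := hM
  have hmin (z : EuclideanSpace ℝ (Fin L)) :=
    hf₁conv.forall_add_le_iff_hasSubgradientAt_neg hf₂conv (hf₁diff z).hasGradientAt
  have hcoco : ∀ x y, ‖gradient f₁ x - gradient f₁ y‖ ^ 2
      ≤ κ * ⟪gradient f₁ x - gradient f₁ y, x - y⟫ := by
    simpa only [Real.coe_toNNReal κ hκ.le] using
      hf₁conv.sq_norm_gradient_sub_le_inner hf₁diff (Real.toNNReal_pos.2 hκ) hf₁lip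
  obtain ⟨a, ha, hlim⟩ := exists_tendsto_forwardBackward hf₂conv hf₂cont
    hf₁lip.continuous hκ hcoco hε hμε hμc ((lt_div_iff₀ hκ).1 hc) hiter ⟨m, (hmin m).1 hm⟩
  exact ⟨a, (hmin a).2 ha, hlim⟩
end
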